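/- arXiv:2109.10784 — 7 statements merged into one kernel-verified Lean document; each statement's English description precedes it below -/
import Mathlib

section
/- Let B ∈ C^{n×n} with B_H := (B+B*)/2 positive semi-definite and B_A := (B-B*)/2. Then B has a purely imaginary eigenvalue if and only if there exists an eigenvector v of B_A with B_H v = 0. -/
open Matrix
open scoped ComplexOrder

/-- `star v ⬝ᵥ Bᴴ *ᵥ v` is the conjugate of `star v ⬝ᵥ B *ᵥ v`. -/
lemma star_dot_conjTranspose_mulVec {n : ℕ} (B : Matrix (Fin n) (Fin n) ℂ) (v : Fin n → ℂ) :
    star v ⬝ᵥ (Bᴴ *ᵥ v) = star (star v ⬝ᵥ (B *ᵥ v)) := by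
  rw [star_dotProduct, star_mulVec, conjTranspose_conjTranspose, ← dotProduct_mulVec]

/-- Eigenvalue membership in `spectrum` via eigenvectors. -/
lemma mem_spectrum_iff_exists {n : ℕ} (B : Matrix (Fin n) (Fin n) ℂ) (μ : ℂ) :
    μ ∈ spectrum ℂ B ↔ ∃ v : Fin n → ℂ, v ≠ 0 ∧ B *ᵥ v = μ • v := by
  rw [spectrum.mem_iff]
  rw [Matrix.isUnit_iff_isUnit_det, isUnit_iff_ne_zero, not_not,
    ← Matrix.exists_mulVec_eq_zero_iff]
  constructor
  · rintro ⟨v, hv, h⟩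
    refine ⟨v, hv, ?_⟩
    have : (algebraMap ℂ (Matrix (Fin n) (Fin n) ℂ)) μ *ᵥ v = μ • v := by
      simp [Algebra.algebraMap_eq_smul_one, Matrix.smul_mulVec, Matrix.one_mulVec]
    rw [Matrix.sub_mulVec, this, sub_eq_zero] at h
    exact h.symm
  · rintro ⟨v, hv, h⟩
    refine ⟨v, hv, ?_⟩
    rw [Matrix.sub_mulVec, h]
    simp [Algebra.algebraMap_eq_smul_one, Matrix.smul_mulVec, Matrix.one_mulVec]

/-- For `B` with positive semi-definite Hermitian part, `B` has a purely imaginary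
eigenvalue iff some eigenvector of the anti-Hermitian part `B_A` lies in `ker B_H`. -/
theorem purelyImaginary_eigenvalue_iff {n : ℕ} (B : Matrix (Fin n) (Fin n) ℂ)
    (hBH : ((1/2 : ℂ) • (B + Bᴴ)).PosSemidef) :
    (∃ μ ∈ spectrum ℂ B, μ.re = 0) ↔
      ∃ v : Fin n → ℂ, v ≠ 0 ∧ (∃ μ : ℂ, ((1/2 : ℂ) • (B - Bᴴ)) *ᵥ v = μ • v) ∧
        ((1/2 : ℂ) • (B + Bᴴ)) *ᵥ v = 0 := by
  set H := (1/2 : ℂ) • (B + Bᴴ) with hH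
  set A := (1/2 : ℂ) • (B - Bᴴ) with hA
  have hHA : H + A = B := by
    rw [hH, hA, ← smul_add]
    ring_nf
    module
  constructor
  · rintro ⟨μ, hμ, hre⟩
    obtain ⟨v, hv, hBv⟩ := (mem_spectrum_iff_exists B μ).mp hμ
    -- star v ⬝ᵥ H *ᵥ v = Re μ * ‖v‖² = 0
    have hdot : star v ⬝ᵥ (H *ᵥ v) = 0 := by
      have h1 : star v ⬝ᵥ (B *ᵥ v) = μ * (star v ⬝ᵥ v) := by
        rw [hBv, dotProduct_smul, smul_eq_mul]
      have h2 : star v ⬝ᵥ (Bᴴ *ᵥ v) = star (μ * (star v ⬝ᵥ v)) := by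
        rw [star_dot_conjTranspose_mulVec, h1]
      have hvv : star (star v ⬝ᵥ v) = star v ⬝ᵥ v := by
        simp [dotProduct, star_sum, mul_comm]
      rw [hH, smul_mulVec, dotProduct_smul, add_mulVec, dotProduct_add, h1, h2,
        star_mul', hvv]
      have hst : star μ = -μ := by
        apply Complex.ext <;> simp [hre]
      rw [hst]
      simp [smul_eq_mul]
    have hHv : H *ᵥ v = 0 := (hBH.dotProduct_mulVec_zero_iff v).mp hdot
    refine ⟨v, hv, ⟨μ, ?_⟩, hHv⟩
    have hAe : A *ᵥ v = B *ᵥ v - H *ᵥ v := by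
      rw [← hHA, add_mulVec]; abel
    rw [hAe, hHv, hBv, sub_zero]
  · rintro ⟨v, hv, ⟨μ, hAv⟩, hHv⟩
    have hBv : B *ᵥ v = μ • v := by
      rw [← hHA, add_mulVec, hHv, hAv, zero_add]
    refine ⟨μ, (mem_spectrum_iff_exists B μ).mpr ⟨v, hv, hBv⟩, ?_⟩
    -- purely imaginary: from star v ⬝ᵥ H v = 0
    have hdot : star v ⬝ᵥ (H *ᵥ v) = 0 := by rw [hHv, dotProduct_zero]
    have h1 : star v ⬝ᵥ (B *ᵥ v) = μ * (star v ⬝ᵥ v) := by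
      rw [hBv, dotProduct_smul, smul_eq_mul]
    have h2 : star v ⬝ᵥ (Bᴴ *ᵥ v) = star (μ * (star v ⬝ᵥ v)) := by
      rw [star_dot_conjTranspose_mulVec, h1]
    have hvv : star (star v ⬝ᵥ v) = star v ⬝ᵥ v := by
      simp [dotProduct, star_sum, mul_comm]
    have key : (μ + (starRingEnd ℂ) μ) * (star v ⬝ᵥ v) = 0 := by
      have h0 := hdot
      rw [hH, smul_mulVec, dotProduct_smul, add_mulVec, dotProduct_add, h1, h2,
        star_mul', hvv, smul_eq_mul] at h0
      simp only [Complex.star_def] at h0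
      field_simp at h0
      linear_combination h0
    have hvv0 : star v ⬝ᵥ v ≠ 0 := fun h => hv ((dotProduct_star_self_eq_zero).mp h)
    have hμ0 : μ + (starRingEnd ℂ) μ = 0 :=
      (mul_eq_zero.mp key).resolve_right hvv0
    rw [Complex.add_conj] at hμ0
    have h2' : 2 * μ.re = 0 := by exact_mod_cast hμ0
    linarith
end

section
/- Let B ∈ C^{n×n} with B_H ≥ 0 and B_A anti-Hermitian. Then B = B_A + B_H has all eigenvalues with strictly positive real part if and only if ε B_A + B_H has all eigenvalues with strictly positive real part for every real ε ≠ 0. -/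
/-!
Write `B = A + H` with `A` skew-Hermitian and `H ⪰ 0`. If `(ε A + H) v = μ v` with `v ≠ 0`,
then `Re μ · ‖v‖² = ⟪v, H v⟫ ≥ 0`, since `⟪v, A v⟫` is purely imaginary. So the only way
`ε A + H` can fail to be hypocoercive is through an eigenvalue `μ ∈ iℝ`; then `⟪v, H v⟫ = 0`
forces `H v = 0`, and `v` is an eigenvector of `B` for the purely imaginary eigenvalue `μ / ε`.
-/

open Matrix
open scoped ComplexOrder

namespace Matrix

variable {ι 𝕜 : Type*} [Fintype ι] [RCLike 𝕜]

theorem mem_spectrum_iff_exists_mulVec_eq_smul {K : Type*} [Field K] [DecidableEq ι]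
    {M : Matrix ι ι K} {μ : K} : μ ∈ spectrum K M ↔ ∃ v ≠ 0, M *ᵥ v = μ • v := by
  rw [spectrum.mem_iff, isUnit_iff_isUnit_det, isUnit_iff_ne_zero, not_ne_iff,
    ← exists_mulVec_eq_zero_iff]
  simp only [sub_mulVec, Algebra.algebraMap_eq_smul_one, smul_mulVec, one_mulVec, sub_eq_zero,
    eq_comm (a := μ • _)]

theorem re_star_dotProduct_mulVec_eq_zero {A : Matrix ι ι 𝕜}
    (hA : A ∈ skewAdjoint (Matrix ι ι 𝕜)) (v : ι → 𝕜) :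
    RCLike.re (star v ⬝ᵥ A *ᵥ v) = 0 := by
  have hconj : star (star v ⬝ᵥ A *ᵥ v) = -(star v ⬝ᵥ A *ᵥ v) := by
    rw [← star_dotProduct_star, star_star, star_mulVec, ← dotProduct_mulVec,
      ← star_eq_conjTranspose, skewAdjoint.mem_iff.mp hA, neg_mulVec, dotProduct_neg]
  have := congrArg RCLike.re hconj
  rw [RCLike.star_def, RCLike.conj_re, map_neg] at this
  linarith

theorem re_mul_re_dotProduct_star_self {A H : Matrix ι ι 𝕜}
    (hA : A ∈ skewAdjoint (Matrix ι ι 𝕜)) {v : ι → 𝕜} {μ : 𝕜}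
    (hμ : (A + H) *ᵥ v = μ • v) :
    RCLike.re μ * RCLike.re (star v ⬝ᵥ v) = RCLike.re (star v ⬝ᵥ H *ᵥ v) := by
  have hquad : star v ⬝ᵥ A *ᵥ v + star v ⬝ᵥ H *ᵥ v = μ * (star v ⬝ᵥ v) := by
    rw [← dotProduct_add, ← add_mulVec, hμ, dotProduct_smul, smul_eq_mul]
  have hs : RCLike.im (star v ⬝ᵥ v) = 0 :=
    (RCLike.nonneg_iff.mp (dotProduct_star_self_nonneg v)).2
  have := congrArg RCLike.re hquad
  rw [map_add, re_star_dotProduct_mulVec_eq_zero hA, RCLike.mul_re, hs] at this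
  linarith

theorem re_eq_zero_and_mulVec_eq_zero_of_re_nonpos {A H : Matrix ι ι 𝕜}
    (hA : A ∈ skewAdjoint (Matrix ι ι 𝕜)) (hH : H.PosSemidef) {v : ι → 𝕜} (hv : v ≠ 0)
    {μ : 𝕜} (hμ : (A + H) *ᵥ v = μ • v) (hre : RCLike.re μ ≤ 0) :
    RCLike.re μ = 0 ∧ H *ᵥ v = 0 := by
  have hs : 0 < RCLike.re (star v ⬝ᵥ v) :=
    (RCLike.pos_iff.mp (dotProduct_star_self_pos_iff.mpr hv)).1
  obtain ⟨hc_re, hc_im⟩ := RCLike.nonneg_iff.mp (hH.dotProduct_mulVec_nonneg v)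
  have hre_eq := re_mul_re_dotProduct_star_self hA hμ
  have hμ_re : RCLike.re μ = 0 := le_antisymm hre (nonneg_of_mul_nonneg_left (hre_eq ▸ hc_re) hs)
  have hc : star v ⬝ᵥ H *ᵥ v = 0 := by
    rw [← RCLike.re_add_im (star v ⬝ᵥ H *ᵥ v), ← hre_eq, hμ_re, hc_im]
    simp
  exact ⟨hμ_re, (hH.dotProduct_mulVec_zero_iff v).mp hc⟩

theorem re_pos_of_mem_spectrum_smul_add [DecidableEq ι] {A H : Matrix ι ι 𝕜}
    (hA : A ∈ skewAdjoint (Matrix ι ι 𝕜)) (hH : H.PosSemidef)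
    (hAH : ∀ μ ∈ spectrum 𝕜 (A + H), 0 < RCLike.re μ) {ε : ℝ} (hε : ε ≠ 0) :
    ∀ μ ∈ spectrum 𝕜 ((ε : 𝕜) • A + H), 0 < RCLike.re μ := by
  intro μ hμ
  by_contra! hre
  obtain ⟨v, hv, hεμ⟩ := mem_spectrum_iff_exists_mulVec_eq_smul.mp hμ
  have hεA : (ε : 𝕜) • A ∈ skewAdjoint (Matrix ι ι 𝕜) := by
    rw [← RCLike.real_smul_eq_coe_smul]
    exact skewAdjoint.smul_mem ε hA
  obtain ⟨hμ_re, hHv⟩ := re_eq_zero_and_mulVec_eq_zero_of_re_nonpos hεA hH hv hεμ hre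
  have hBv : (A + H) *ᵥ v = (μ / ε) • v := by
    rw [add_mulVec, smul_mulVec, hHv, add_zero] at hεμ
    rw [add_mulVec, hHv, add_zero, div_eq_inv_mul, ← smul_smul, ← hεμ, smul_smul,
      inv_mul_cancel₀ (RCLike.ofReal_ne_zero.mpr hε), one_smul]
  have := hAH _ (mem_spectrum_iff_exists_mulVec_eq_smul.mpr ⟨v, hv, hBv⟩)
  rw [RCLike.div_re_ofReal, hμ_re, zero_div] at this
  exact this.false

end Matrix

/-- `B = B_A + B_H` is hypocoercive (spectrum in the open right half plane) iff
`ε B_A + B_H` is hypocoercive for every real `ε ≠ 0`. -/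
theorem hypocoercive_iff_eps_hypocoercive {n : ℕ} (B : Matrix (Fin n) (Fin n) ℂ)
    (hBH : ((1/2 : ℂ) • (B + Bᴴ)).PosSemidef) :
    (∀ μ ∈ spectrum ℂ B, 0 < μ.re) ↔
      ∀ ε : ℝ, ε ≠ 0 →
        ∀ μ ∈ spectrum ℂ
          ((ε : ℂ) • ((1/2 : ℂ) • (B - Bᴴ)) + (1/2 : ℂ) • (B + Bᴴ)), 0 < μ.re := by
  have hBA : (1/2 : ℂ) • (B - Bᴴ) ∈ skewAdjoint (Matrix (Fin n) (Fin n) ℂ) := by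
    rw [skewAdjoint.mem_iff, star_eq_conjTranspose, conjTranspose_smul, conjTranspose_sub,
      conjTranspose_conjTranspose, ← smul_neg, neg_sub]
    simp
  have hB : (1/2 : ℂ) • (B - Bᴴ) + (1/2 : ℂ) • (B + Bᴴ) = B := by module
  constructor
  · intro hpos ε hε
    exact re_pos_of_mem_spectrum_smul_add hBA hBH (by rwa [hB]) hε
  · intro h
    have h1 := h 1 one_ne_zero
    rwa [Complex.ofReal_one, one_smul, hB] at h1
end

section
/- Let B ∈ C^{n×n} with B_H ≥ 0, B_A = (B-B*)/2. For every m ∈ ℕ₀, the range of the block matrix [√B_H, B_A √B_H, …, B_A^m √B_H] equals the range of [√B_H, B √B_H, …, B^m √B_H]. -/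
/-!
Write `S = √B_H`, so that `B = B_A + S S`. Whenever `C = A + S T`, the identity
`C^{j+1} S = A (C^j S) + S (T C^j S)` shows by induction on `j` that `C^j S` has range inside
`range S + A·range S + ⋯ + A^j·range S`. Applied once with `(C, A, T) = (B, B_A, S)` and once with
`(C, A, T) = (B_A, B, -S)`, this gives both inclusions.
-/

open Matrix
open scoped ComplexOrder

noncomputable def Matrix.PosSemidef.sqrt {n : Type*} [Fintype n] [DecidableEq n] {𝕜 : Type*} [RCLike 𝕜]
    {A : Matrix n n 𝕜} (hA : A.PosSemidef) : Matrix n n 𝕜 :=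
  hA.1.eigenvectorUnitary.1 * diagonal ((↑) ∘ (√·) ∘ hA.1.eigenvalues) *
    (star hA.1.eigenvectorUnitary : Matrix n n 𝕜)

lemma Matrix.PosSemidef.sqrt_mul_self {n : Type*} [Fintype n] [DecidableEq n] {𝕜 : Type*}
    [RCLike 𝕜] {A : Matrix n n 𝕜} (hA : A.PosSemidef) : hA.sqrt * hA.sqrt = A := by
  conv_rhs => rw [hA.1.spectral_theorem]
  have hU : (star hA.1.eigenvectorUnitary : Matrix n n 𝕜) * hA.1.eigenvectorUnitary = 1 :=
    Unitary.coe_star_mul_self _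
  simp only [Matrix.PosSemidef.sqrt, Unitary.conjStarAlgAut_apply, mul_assoc]
  rw [← mul_assoc _ (hA.1.eigenvectorUnitary : Matrix n n 𝕜), hU, one_mul, ← mul_assoc (diagonal _),
    diagonal_mul_diagonal]
  congr 3
  funext i
  simp only [Function.comp_apply]
  rw [← RCLike.ofReal_mul, Real.mul_self_sqrt (hA.eigenvalues_nonneg i)]

namespace Module.End

variable {R M : Type*} [Ring R] [AddCommGroup M] [Module R M]

/-- The range of the block operator `[S, A S, …, A^m S]`. -/
def krylovSubspace (A S : Module.End R M) (m : ℕ) : Submodule R M :=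
  ⨆ j : Fin (m + 1), LinearMap.range (A ^ (j : ℕ) * S)

variable {A C S T : Module.End R M}

lemma range_pow_mul_le_krylovSubspace {j m : ℕ} (h : j ≤ m) :
    LinearMap.range (A ^ j * S) ≤ krylovSubspace A S m :=
  le_iSup_of_le (⟨j, by omega⟩ : Fin (m + 1)) le_rfl

lemma range_le_krylovSubspace (m : ℕ) : LinearMap.range S ≤ krylovSubspace A S m := by
  simpa using range_pow_mul_le_krylovSubspace (A := A) (S := S) m.zero_le

lemma krylovSubspace_mono {j m : ℕ} (h : j ≤ m) : krylovSubspace A S j ≤ krylovSubspace A S m :=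
  iSup_le fun i => range_pow_mul_le_krylovSubspace (by omega)

lemma map_krylovSubspace_le (m : ℕ) :
    (krylovSubspace A S m).map A ≤ krylovSubspace A S (m + 1) := by
  rw [krylovSubspace, Submodule.map_iSup]
  refine iSup_le fun j => ?_
  rw [← LinearMap.range_comp, ← mul_eq_comp, ← mul_assoc, ← pow_succ']
  exact range_pow_mul_le_krylovSubspace (by omega)

lemma range_pow_mul_le_krylovSubspace_of_eq_add_mul (h : C = A + S * T) (j : ℕ) :
    LinearMap.range (C ^ j * S) ≤ krylovSubspace A S j := by
  induction j with
  | zero => simpa using range_le_krylovSubspace 0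
  | succ j ih =>
    have hstep : C ^ (j + 1) * S = A * (C ^ j * S) + S * (T * C ^ j * S) := by
      rw [pow_succ', h]; simp only [add_mul, mul_assoc]
    calc LinearMap.range (C ^ (j + 1) * S)
        ≤ LinearMap.range (A * (C ^ j * S)) ⊔ LinearMap.range (S * (T * C ^ j * S)) :=
          hstep ▸ LinearMap.range_add_le _ _
      _ ≤ (krylovSubspace A S j).map A ⊔ LinearMap.range S := by
          rw [mul_eq_comp, mul_eq_comp, LinearMap.range_comp]
          exact sup_le_sup (Submodule.map_mono ih) (LinearMap.range_comp_le_range _ _)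
      _ ≤ krylovSubspace A S (j + 1) :=
          sup_le (map_krylovSubspace_le j) (range_le_krylovSubspace _)

lemma krylovSubspace_le_of_eq_add_mul (h : C = A + S * T) (m : ℕ) :
    krylovSubspace C S m ≤ krylovSubspace A S m :=
  iSup_le fun j =>
    (range_pow_mul_le_krylovSubspace_of_eq_add_mul h j).trans (krylovSubspace_mono (by omega))

lemma krylovSubspace_eq_of_eq_add_mul (h : C = A + S * T) (m : ℕ) :
    krylovSubspace C S m = krylovSubspace A S m :=
  le_antisymm (krylovSubspace_le_of_eq_add_mul h m)
    (krylovSubspace_le_of_eq_add_mul (T := -T) (by rw [h, mul_neg]; abel) m)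

end Module.End

lemma Matrix.mulVecLin_pow_mul {n R : Type*} [Fintype n] [DecidableEq n] [CommRing R]
    (A S : Matrix n n R) (j : ℕ) :
    (A ^ j * S).mulVecLin = A.mulVecLin ^ j * S.mulVecLin := by
  simp only [← toLin'_apply', toLin'_mul, toLin'_pow, Module.End.mul_eq_comp]

/-- The range of `[√B_H, B_A √B_H, …, B_A^m √B_H]` equals the range of
`[√B_H, B √B_H, …, B^m √B_H]`. -/
theorem kalman_range_BA_eq_range_B {n : ℕ} (B : Matrix (Fin n) (Fin n) ℂ)
    (hBH : ((1/2 : ℂ) • (B + Bᴴ)).PosSemidef) (m : ℕ) :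
    (⨆ j : Fin (m+1),
        LinearMap.range ((((1/2 : ℂ) • (B - Bᴴ)) ^ (j : ℕ) * hBH.sqrt).mulVecLin))
      = ⨆ j : Fin (m+1),
        LinearMap.range ((B ^ (j : ℕ) * hBH.sqrt).mulVecLin) := by
  set S := hBH.sqrt
  set BA := (1/2 : ℂ) • (B - Bᴴ)
  have hB : B = BA + S * S := by rw [hBH.sqrt_mul_self]; module
  have hB_lin : B.mulVecLin = BA.mulVecLin + S.mulVecLin * S.mulVecLin := by
    rw [hB, mulVecLin_add, mulVecLin_mul, Module.End.mul_eq_comp]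
  simp only [mulVecLin_pow_mul]
  exact (Module.End.krylovSubspace_eq_of_eq_add_mul hB_lin m).symm
end

section
/- Let B ∈ C^{n×n} with B_H ≥ 0, B_A = (B-B*)/2. For every m ∈ ℕ₀, the range of [√B_H, B_A √B_H, …, B_A^m √B_H] equals the range of [√B_H, B* √B_H, …, (B*)^m √B_H]. -/
/-!
Write `f` for `B_A`, `g` for `B*` and `V` for the range of `√B_H`. Since
`B_A + B* = B_H = √B_H √B_H`, the range of `f + g` lies in `V`, so `f w ≡ -g w` modulo `V`
for every `w`. Inductively `f^j V ⊆ V + g V + ⋯ + g^j V`, and by symmetry the two Krylov spaces coincide.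
-/

open Matrix
open scoped ComplexOrder

namespace Submodule

variable {R M : Type*} [Ring R] [AddCommGroup M] [Module R M]

def krylov (f : Module.End R M) (V : Submodule R M) (m : ℕ) : Submodule R M :=
  ⨆ j : Fin (m + 1), V.map (f ^ (j : ℕ))

lemma le_krylov (f : Module.End R M) (V : Submodule R M) (m : ℕ) : V ≤ krylov f V m := by
  calc V = V.map (f ^ 0) := by rw [pow_zero, Module.End.one_eq_id, map_id]
    _ ≤ krylov f V m := le_iSup (fun j : Fin (m + 1) => V.map (f ^ (j : ℕ))) 0

lemma krylov_mono (f : Module.End R M) (V : Submodule R M) {j m : ℕ} (hjm : j ≤ m) :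
    krylov f V j ≤ krylov f V m :=
  iSup_le fun i => le_iSup (fun k : Fin (m + 1) => V.map (f ^ (k : ℕ))) ⟨i, by omega⟩

lemma map_krylov_le_krylov_succ (f : Module.End R M) (V : Submodule R M) (m : ℕ) :
    (krylov f V m).map f ≤ krylov f V (m + 1) := by
  rw [krylov, map_iSup]
  refine iSup_le fun j => ?_
  rw [← map_comp, ← Module.End.mul_eq_comp, ← pow_succ']
  exact le_iSup (fun k : Fin (m + 2) => V.map (f ^ (k : ℕ))) j.succ

lemma map_le_sup_map_of_range_add_le {f g : Module.End R M} {V : Submodule R M}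
    (hfg : LinearMap.range (f + g) ≤ V) (W : Submodule R M) : W.map f ≤ V ⊔ W.map g := by
  rintro _ ⟨w, hw, rfl⟩
  have hsplit : f w = (f + g) w - g w := by simp
  rw [hsplit]
  exact sub_mem (mem_sup_left (hfg ⟨w, rfl⟩)) (mem_sup_right ⟨w, hw, rfl⟩)

lemma map_pow_le_krylov_of_range_add_le {f g : Module.End R M} {V : Submodule R M}
    (hfg : LinearMap.range (f + g) ≤ V) (j : ℕ) : V.map (f ^ j) ≤ krylov g V j := by
  induction j with
  | zero => simpa only [pow_zero, Module.End.one_eq_id, map_id] using le_krylov g V 0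
  | succ j ih =>
    calc V.map (f ^ (j + 1)) = (V.map (f ^ j)).map f := by
          rw [pow_succ', Module.End.mul_eq_comp, map_comp]
      _ ≤ (krylov g V j).map f := map_mono ih
      _ ≤ V ⊔ (krylov g V j).map g := map_le_sup_map_of_range_add_le hfg _
      _ ≤ krylov g V (j + 1) := sup_le (le_krylov g V _) (map_krylov_le_krylov_succ g V j)

lemma krylov_le_of_range_add_le {f g : Module.End R M} {V : Submodule R M}
    (hfg : LinearMap.range (f + g) ≤ V) (m : ℕ) : krylov f V m ≤ krylov g V m :=
  iSup_le fun j =>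
    (map_pow_le_krylov_of_range_add_le hfg j).trans (krylov_mono g V (Nat.lt_succ_iff.mp j.2))

lemma krylov_eq_of_range_add_le {f g : Module.End R M} {V : Submodule R M}
    (hfg : LinearMap.range (f + g) ≤ V) (m : ℕ) : krylov f V m = krylov g V m :=
  le_antisymm (krylov_le_of_range_add_le hfg m)
    (krylov_le_of_range_add_le (add_comm f g ▸ hfg) m)

end Submodule

lemma Matrix.range_mulVecLin_pow_mul {n R : Type*} [Fintype n] [DecidableEq n] [CommRing R]
    (A S : Matrix n n R) (j : ℕ) :
    LinearMap.range ((A ^ j * S).mulVecLin) =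
      (LinearMap.range S.mulVecLin).map (A.mulVecLin ^ j) := by
  simp only [← toLin'_apply', toLin'_mul, toLin'_pow, LinearMap.range_comp]

/-- The range of `[√B_H, B_A √B_H, …, B_A^m √B_H]` equals the range of
`[√B_H, B* √B_H, …, (B*)^m √B_H]`. -/
theorem kalman_range_BA_eq_range_Bstar {n : ℕ} (B : Matrix (Fin n) (Fin n) ℂ)
    (hBH : ((1/2 : ℂ) • (B + Bᴴ)).PosSemidef) (m : ℕ) :
    (⨆ j : Fin (m+1),
        LinearMap.range ((((1/2 : ℂ) • (B - Bᴴ)) ^ (j : ℕ) * hBH.sqrt).mulVecLin))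
      = ⨆ j : Fin (m+1),
        LinearMap.range ((Bᴴ ^ (j : ℕ) * hBH.sqrt).mulVecLin) := by
  have hsum : (1/2 : ℂ) • (B - Bᴴ) + Bᴴ = hBH.sqrt * hBH.sqrt := by
    rw [hBH.sqrt_mul_self]; module
  have hrange : LinearMap.range (((1/2 : ℂ) • (B - Bᴴ)).mulVecLin + Bᴴ.mulVecLin)
      ≤ LinearMap.range hBH.sqrt.mulVecLin := by
    rw [← mulVecLin_add, hsum, mulVecLin_mul, LinearMap.range_comp]
    exact LinearMap.map_le_range
  simp only [range_mulVecLin_pow_mul]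
  exact Submodule.krylov_eq_of_range_add_le hrange m
end

section
/- Let B ∈ C^{n×n} with B_H ≥ 0, B_A = (B-B*)/2. For each m ∈ ℕ₀, the matrix Σ_{j=0}^m B_A^j B_H (B_A*)^j is positive definite if and only if Σ_{j=0}^m B^j B_H (B*)^j is positive definite, if and only if Σ_{j=0}^m (B*)^j B_H B^j is positive definite. -/
open Matrix
open scoped ComplexOrder

/-!
Write `B = H + A` with `H = B_H ⪰ 0` and `A = B_A`. A sum `∑_{j<k} C^j H (Cᴴ)^j` of positive
semidefinite terms is positive definite iff the only `x` with `H (Cᴴ)^j x = 0` for all `j < k`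
is `x = 0`. This kernel condition is unchanged when `Cᴴ` is replaced by `-Cᴴ`, or by `H + Cᴴ`
(if `H` kills the first iterates, adding `H` does not change them). Since `Aᴴ = -A`,
`B = H + A` and `Bᴴ = H - A`, all three conditions reduce to the one for `A`.
-/

namespace Matrix

section KernelConditions

variable {ι R : Type*} [Fintype ι] [DecidableEq ι] [Ring R]

lemma add_pow_mulVec_eq_pow_mulVec {H A : Matrix ι ι R} {x : ι → R} {k : ℕ}
    (h : ∀ j < k, H *ᵥ (A ^ j *ᵥ x) = 0) : (H + A) ^ k *ᵥ x = A ^ k *ᵥ x := by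
  induction k with
  | zero => simp
  | succ k ih =>
    rw [pow_succ', pow_succ', ← mulVec_mulVec, ← mulVec_mulVec,
      ih fun j hj => h j (Nat.lt_succ_of_lt hj), add_mulVec, h k k.lt_succ_self, zero_add]

lemma forall_mulVec_add_pow_mulVec_eq_zero_iff (H A : Matrix ι ι R) (x : ι → R) (k : ℕ) :
    (∀ j < k, H *ᵥ ((H + A) ^ j *ᵥ x) = 0) ↔ ∀ j < k, H *ᵥ (A ^ j *ᵥ x) = 0 := by
  constructor
  · intro h j hj
    have hneg : ∀ i < j, (-H) *ᵥ ((H + A) ^ i *ᵥ x) = 0 := fun i hi => by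
      rw [neg_mulVec, h i (hi.trans hj), neg_zero]
    have hA := add_pow_mulVec_eq_pow_mulVec hneg
    rw [neg_add_cancel_left] at hA
    exact hA ▸ h j hj
  · intro h j hj
    rw [add_pow_mulVec_eq_pow_mulVec fun i hi => h i (hi.trans hj)]
    exact h j hj

lemma mulVec_neg_pow_mulVec_eq_zero_iff (H A : Matrix ι ι R) (x : ι → R) (j : ℕ) :
    H *ᵥ ((-A) ^ j *ᵥ x) = 0 ↔ H *ᵥ (A ^ j *ᵥ x) = 0 := by
  rcases neg_one_pow_eq_or (Matrix ι ι R) j with h | h <;>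
    simp [neg_pow, h, neg_mulVec, mulVec_neg]

end KernelConditions

variable {ι κ 𝕜 : Type*} [Fintype ι] [RCLike 𝕜]

lemma PosSemidef.posDef_iff_forall_mulVec_eq_zero {M : Matrix ι ι 𝕜} (hM : M.PosSemidef) :
    M.PosDef ↔ ∀ x, M *ᵥ x = 0 → x = 0 := by
  refine ⟨fun hPD x hx => ?_, fun h => PosDef.of_dotProduct_mulVec_pos hM.1 fun x hx => ?_⟩
  · by_contra hx0
    simpa [hx] using hPD.dotProduct_mulVec_pos hx0
  · refine (hM.dotProduct_mulVec_nonneg x).lt_of_ne fun h0 => hx (h x ?_)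
    exact (hM.dotProduct_mulVec_zero_iff x).mp h0.symm

lemma posDef_sum_iff_of_posSemidef {M : κ → Matrix ι ι 𝕜} (s : Finset κ)
    (hM : ∀ j ∈ s, (M j).PosSemidef) :
    (∑ j ∈ s, M j).PosDef ↔ ∀ x, (∀ j ∈ s, M j *ᵥ x = 0) → x = 0 := by
  have hsum := posSemidef_sum s hM
  rw [hsum.posDef_iff_forall_mulVec_eq_zero]
  refine forall_congr' fun x => imp_congr_left ?_
  rw [← hsum.dotProduct_mulVec_zero_iff, sum_mulVec, dotProduct_sum,
    Finset.sum_eq_zero_iff_of_nonneg fun j hj => (hM j hj).dotProduct_mulVec_nonneg x]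
  exact forall₂_congr fun j hj => (hM j hj).dotProduct_mulVec_zero_iff x

lemma PosSemidef.mul_mul_conjTranspose_mulVec_eq_zero_iff {ι' : Type*} [Fintype ι']
    {H : Matrix ι ι 𝕜} (hH : H.PosSemidef) (C : Matrix ι' ι 𝕜) (x : ι' → 𝕜) :
    (C * H * Cᴴ) *ᵥ x = 0 ↔ H *ᵥ (Cᴴ *ᵥ x) = 0 := by
  rw [← (hH.mul_mul_conjTranspose_same C).dotProduct_mulVec_zero_iff,
    ← hH.dotProduct_mulVec_zero_iff, ← mulVec_mulVec, ← mulVec_mulVec, dotProduct_mulVec,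
    star_mulVec, conjTranspose_conjTranspose]

lemma posDef_sum_pow_mul_mul_conjTranspose_pow_iff [DecidableEq ι] {H : Matrix ι ι 𝕜}
    (hH : H.PosSemidef) (C : Matrix ι ι 𝕜) (k : ℕ) :
    (∑ j ∈ Finset.range k, C ^ j * H * Cᴴ ^ j).PosDef ↔
      ∀ x, (∀ j < k, H *ᵥ (Cᴴ ^ j *ᵥ x) = 0) → x = 0 := by
  simp_rw [← conjTranspose_pow]
  rw [posDef_sum_iff_of_posSemidef _ fun j _ => hH.mul_mul_conjTranspose_same (C ^ j)]
  simp_rw [Finset.mem_range, hH.mul_mul_conjTranspose_mulVec_eq_zero_iff]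

end Matrix

/-- `Σ B_A^j B_H (B_A*)^j > 0` iff `Σ B^j B_H (B*)^j > 0` iff `Σ (B*)^j B_H B^j > 0`. -/
theorem Tm_posDef_tfae {n : ℕ} (B : Matrix (Fin n) (Fin n) ℂ)
    (hBH : ((1/2 : ℂ) • (B + Bᴴ)).PosSemidef) (m : ℕ) :
    ((∑ j ∈ Finset.range (m+1),
        ((1/2 : ℂ) • (B - Bᴴ)) ^ j * ((1/2 : ℂ) • (B + Bᴴ)) *
          (((1/2 : ℂ) • (B - Bᴴ))ᴴ) ^ j).PosDef
      ↔ (∑ j ∈ Finset.range (m+1),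
          B ^ j * ((1/2 : ℂ) • (B + Bᴴ)) * (Bᴴ) ^ j).PosDef) ∧
    ((∑ j ∈ Finset.range (m+1),
        B ^ j * ((1/2 : ℂ) • (B + Bᴴ)) * (Bᴴ) ^ j).PosDef
      ↔ (∑ j ∈ Finset.range (m+1),
          (Bᴴ) ^ j * ((1/2 : ℂ) • (B + Bᴴ)) * B ^ j).PosDef) := by
  set H : Matrix (Fin n) (Fin n) ℂ := (1/2 : ℂ) • (B + Bᴴ)
  set A : Matrix (Fin n) (Fin n) ℂ := (1/2 : ℂ) • (B - Bᴴ)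
  have hA : Aᴴ = -A := by
    simp only [A, conjTranspose_smul, conjTranspose_sub, conjTranspose_conjTranspose, star_div₀,
      star_one, RCLike.star_def, map_ofNat]
    module
  have hB : B = H + A := by module
  have hBadj : Bᴴ = H + -A := by module
  have hBadjSum := posDef_sum_pow_mul_mul_conjTranspose_pow_iff hBH Bᴴ (m + 1)
  rw [conjTranspose_conjTranspose] at hBadjSum
  rw [posDef_sum_pow_mul_mul_conjTranspose_pow_iff hBH,
    posDef_sum_pow_mul_mul_conjTranspose_pow_iff hBH, hBadjSum, hA, hBadj, hB]
  simp only [forall_mulVec_add_pow_mulVec_eq_zero_iff, mulVec_neg_pow_mulVec_eq_zero_iff, and_self]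
end

section
/- Let E_k ∈ ℝ^{k×k} be the matrix with (E_k)_A the anti-symmetric tridiagonal Toeplitz matrix toeplitz(−1,0,1) and (E_k)_H = diag(0,…,0,1). Then E_k has no purely imaginary eigenvalue (equivalently, every eigenvalue of E_k has strictly positive real part). -/
open Matrix Finset

lemma sum_pick {k : ℕ} (f : Fin k → ℂ) (c : ℕ) :
    (∑ j : Fin k, if (j:ℕ) = c then f j else 0)
      = if h : c < k then f ⟨c, h⟩ else 0 := by
  split_ifs with h
  · rw [Finset.sum_eq_single (⟨c, h⟩ : Fin k)]
    · simp
    · intro b _ hb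
      rw [if_neg]
      simpa [Fin.ext_iff] using hb
    · simp
  · apply Finset.sum_eq_zero
    intro j _
    rw [if_neg]
    intro hc
    exact h (hc ▸ j.isLt)


/-- The matrix `E_k` with superdiagonal `1`, subdiagonal `-1`, entry `(k,k) = 1`. -/
def Ek (k : ℕ) : Matrix (Fin k) (Fin k) ℝ :=
  Matrix.of fun i j =>
    (if (j : ℕ) = (i : ℕ) + 1 then 1 else 0)
      + (if (i : ℕ) = (j : ℕ) + 1 then -1 else 0)
      + (if (i : ℕ) = k - 1 ∧ (j : ℕ) = k - 1 then 1 else 0)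

lemma mulVec_Ek (k : ℕ) (v : Fin k → ℂ) (i : Fin k) :
    ((Ek k).map (Complex.ofReal)).mulVec v i
      = (if h : (i:ℕ)+1 < k then v ⟨(i:ℕ)+1, h⟩ else 0)
        - (if h : 1 ≤ (i:ℕ) then v ⟨(i:ℕ)-1, lt_of_le_of_lt (Nat.sub_le _ _) i.isLt⟩ else 0)
        + (if (i:ℕ) = k-1 then v i else 0) := by
  simp only [mulVec, dotProduct, map_apply, Ek, of_apply]
  push_cast
  simp only [apply_ite Complex.ofReal, Complex.ofReal_one, Complex.ofReal_zero, Complex.ofReal_neg]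
  have expand : ∀ j : Fin k,
      ((if (j:ℕ) = (i:ℕ)+1 then (1:ℂ) else 0)
        + (if (i:ℕ) = (j:ℕ)+1 then -1 else 0)
        + (if (i:ℕ) = k-1 ∧ (j:ℕ) = k-1 then 1 else 0)) * v j
      = (if (j:ℕ) = (i:ℕ)+1 then v j else 0)
        + (if (i:ℕ) = (j:ℕ)+1 then -v j else 0)
        + (if (i:ℕ) = k-1 ∧ (j:ℕ) = k-1 then v j else 0) := by
    intro j
    split_ifs <;> ring
  rw [Finset.sum_congr rfl (fun j _ => expand j)]
  rw [Finset.sum_add_distrib, Finset.sum_add_distrib]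
  rw [sum_pick]
  have h2sum : (∑ j : Fin k, if (i:ℕ) = (j:ℕ)+1 then -v j else 0)
      = -(if h : 1 ≤ (i:ℕ) then v ⟨(i:ℕ)-1, lt_of_le_of_lt (Nat.sub_le _ _) i.isLt⟩ else 0) := by
    by_cases h1 : 1 ≤ (i:ℕ)
    · have step : ∀ j : Fin k, (if (i:ℕ) = (j:ℕ)+1 then -v j else 0)
          = (if (j:ℕ) = (i:ℕ)-1 then -v j else 0) := by
        intro j
        congr 1
        simp only [eq_iff_iff]
        omega
      rw [Finset.sum_congr rfl (fun j _ => step j), sum_pick (fun j => -v j)]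
      rw [dif_pos (lt_of_le_of_lt (Nat.sub_le (i:ℕ) 1) i.isLt), dif_pos h1]
    · rw [dif_neg h1, neg_zero]
      apply Finset.sum_eq_zero
      intro j _
      rw [if_neg]
      omega
  have h3sum : (∑ j : Fin k, if ((i:ℕ) = k-1 ∧ (j:ℕ) = k-1) then v j else 0)
      = (if (i:ℕ) = k-1 then v i else 0) := by
    by_cases h2 : (i:ℕ) = k-1
    · rw [if_pos h2]
      have step : ∀ j : Fin k, (if ((i:ℕ) = k-1 ∧ (j:ℕ) = k-1) then v j else 0)
          = (if (j:ℕ) = k-1 then v j else 0) := by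
        intro j
        simp [h2]
      rw [Finset.sum_congr rfl (fun j _ => step j), sum_pick]
      have hlt : k - 1 < k := lt_of_le_of_lt (h2 ▸ Nat.le_refl _) (h2 ▸ i.isLt)
      rw [dif_pos hlt]
      congr 1
      exact Fin.ext h2.symm
    · rw [if_neg h2]
      apply Finset.sum_eq_zero
      intro j _
      rw [if_neg]
      tauto
  rw [h2sum, h3sum]
  ring

lemma Ek_sym (k : ℕ) (i j : Fin k) :
    Ek k i j + Ek k j i = if ((i:ℕ) = k-1 ∧ (j:ℕ) = k-1) then 2 else 0 := by
  simp only [Ek, of_apply]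
  have hco : ((j:ℕ) = k-1 ∧ (i:ℕ) = k-1) ↔ ((i:ℕ) = k-1 ∧ (j:ℕ) = k-1) := and_comm
  rw [if_congr hco rfl rfl]
  split_ifs <;> ring

/-- Every eigenvalue of `E_k` has strictly positive real part. -/
theorem Ek_eigenvalues_pos_re (k : ℕ) (hk : 1 ≤ k) :
    ∀ μ ∈ spectrum ℂ ((Ek k).map (Complex.ofReal)), 0 < μ.re := by
  intro μ hμ
  set A := (Ek k).map (Complex.ofReal) with hAdef
  rw [spectrum.mem_iff, Matrix.isUnit_iff_isUnit_det, isUnit_iff_ne_zero, not_not] at hμ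
  obtain ⟨v, hv0, hv⟩ := (Matrix.exists_mulVec_eq_zero_iff).mpr hμ
  rw [Matrix.sub_mulVec] at hv
  have halg : (algebraMap ℂ (Matrix (Fin k) (Fin k) ℂ) μ) *ᵥ v = μ • v := by
    rw [Algebra.algebraMap_eq_smul_one, Matrix.smul_mulVec, Matrix.one_mulVec]
  rw [halg, sub_eq_zero] at hv
  have hv' : A *ᵥ v = μ • v := hv.symm
  clear hv hμ
  have hL : k - 1 < k := by omega
  set L : Fin k := ⟨k-1, hL⟩ with hLdef
  set S : ℂ := ∑ i, (starRingEnd ℂ) (v i) * (A *ᵥ v) i with hSdef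
  set N : ℝ := ∑ i, Complex.normSq (v i) with hNdef
  have hNpos : 0 < N := by
    rw [hNdef]
    obtain ⟨i, hi⟩ := Function.ne_iff.mp hv0
    exact Finset.sum_pos' (fun i _ => Complex.normSq_nonneg _)
      ⟨i, Finset.mem_univ i, Complex.normSq_pos.mpr hi⟩
  have hS1 : S = μ * (N : ℂ) := by
    rw [hSdef, hv']
    push_cast [hNdef]
    rw [Finset.mul_sum]
    apply Finset.sum_congr rfl
    intro i _
    rw [Pi.smul_apply, smul_eq_mul, Complex.normSq_eq_conj_mul_self]
    ring
  have hS2 : S + star S = 2 * (Complex.normSq (v L) : ℂ) := by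
    have hexp : S = ∑ i, ∑ j, ((Ek k i j : ℝ) : ℂ) * ((starRingEnd ℂ) (v i) * v j) := by
      rw [hSdef]
      apply Finset.sum_congr rfl
      intro i _
      rw [mulVec, dotProduct, Finset.mul_sum]
      apply Finset.sum_congr rfl
      intro j _
      rw [hAdef, map_apply]
      ring
    have hstar : star S = ∑ i, ∑ j, ((Ek k j i : ℝ) : ℂ) * ((starRingEnd ℂ) (v i) * v j) := by
      rw [hexp]
      simp only [star_sum]
      rw [Finset.sum_comm]
      apply Finset.sum_congr rfl
      intro i _
      apply Finset.sum_congr rfl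
      intro j _
      simp only [star_mul', Complex.star_def, _root_.map_mul, Complex.conj_conj, Complex.conj_ofReal]
      ring
    rw [hstar, hexp, ← Finset.sum_add_distrib]
    have step1 : ∀ i : Fin k,
        ((∑ j : Fin k, ((Ek k i j : ℝ) : ℂ) * ((starRingEnd ℂ) (v i) * v j))
          + ∑ j : Fin k, ((Ek k j i : ℝ) : ℂ) * ((starRingEnd ℂ) (v i) * v j))
        = ∑ j : Fin k, (if (j:ℕ) = k-1 then
            (if (i:ℕ) = k-1 then 2 * ((starRingEnd ℂ) (v i) * v j) else 0) else 0) := by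
      intro i
      rw [← Finset.sum_add_distrib]
      apply Finset.sum_congr rfl
      intro j _
      rw [← add_mul, ← Complex.ofReal_add, Ek_sym, ← ite_and]
      have hco : ((j:ℕ) = k-1 ∧ (i:ℕ) = k-1) ↔ ((i:ℕ) = k-1 ∧ (j:ℕ) = k-1) := and_comm
      rw [if_congr hco rfl rfl]
      split_ifs <;> push_cast <;> ring
    rw [Finset.sum_congr rfl (fun i _ => step1 i)]
    have step2 : ∀ i : Fin k,
        (∑ j : Fin k, (if (j:ℕ) = k-1 then
            (if (i:ℕ) = k-1 then 2 * ((starRingEnd ℂ) (v i) * v j) else 0) else 0))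
        = (if (i:ℕ) = k-1 then 2 * ((starRingEnd ℂ) (v i) * v L) else 0) := by
      intro i
      rw [sum_pick (fun j => if (i:ℕ) = k-1 then 2 * ((starRingEnd ℂ) (v i) * v j) else 0) (k-1)]
      rw [dif_pos hL]
    rw [Finset.sum_congr rfl (fun i _ => step2 i)]
    rw [sum_pick (fun i => 2 * ((starRingEnd ℂ) (v i) * v L)) (k-1), dif_pos hL]
    rw [Complex.normSq_eq_conj_mul_self]
  -- real part identity
  have hre : μ.re * N = Complex.normSq (v L) := by
    have h1 : S + star S = ((2 * μ.re : ℝ) : ℂ) * (N : ℂ) := by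
      rw [hS1]
      rw [star_mul']
      have : star ((N : ℝ) : ℂ) = ((N : ℝ) : ℂ) := by
        rw [Complex.star_def, Complex.conj_ofReal]
      rw [this, ← add_mul]
      congr 1
      rw [← Complex.add_conj]
      rfl
    rw [hS2] at h1
    have h2 : (2 * μ.re) * N = 2 * Complex.normSq (v L) := by
      have := h1.symm
      exact_mod_cast this
    linarith
  -- nonneg
  have hge : 0 ≤ μ.re := by
    nlinarith [Complex.normSq_nonneg (v L)]
  by_contra hcon
  have hre0 : μ.re = 0 := le_antisymm (not_lt.mp hcon) hge
  have hvL : v L = 0 := by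
    apply Complex.normSq_eq_zero.mp
    rw [← hre, hre0, zero_mul]
  -- rows
  have hrow : ∀ i : Fin k,
      (if h : (i:ℕ)+1 < k then v ⟨(i:ℕ)+1, h⟩ else 0)
        - (if h : 1 ≤ (i:ℕ) then v ⟨(i:ℕ)-1, lt_of_le_of_lt (Nat.sub_le _ _) i.isLt⟩ else 0)
        + (if (i:ℕ) = k-1 then v i else 0) = μ * v i := by
    intro i
    rw [← mulVec_Ek, ← hAdef, hv', Pi.smul_apply, smul_eq_mul]
  have hall : ∀ m : ℕ, ∀ j : Fin k, k - 1 - m ≤ (j:ℕ) → v j = 0 := by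
    intro m
    induction m with
    | zero =>
      intro j hj
      have hjk := j.isLt
      have : j = L := Fin.ext (by have hLv : (L:ℕ) = k-1 := rfl; omega)
      rw [this]; exact hvL
    | succ m ih =>
      intro j hj
      by_cases hcase : k - 1 - m ≤ (j:ℕ)
      · exact ih j hcase
      · push_neg at hcase
        have hlt : (j:ℕ)+1 < k := by omega
        set i : Fin k := ⟨(j:ℕ)+1, hlt⟩ with hidef
        have h1 := hrow i
        have hiv : (i:ℕ) = (j:ℕ)+1 := rfl
        have hvi : v i = 0 := ih i (by omega)
        have t1 : (if h : (i:ℕ)+1 < k then v ⟨(i:ℕ)+1, h⟩ else 0) = 0 := by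
          split_ifs with h2
          · exact ih ⟨(i:ℕ)+1, h2⟩ (by have h'' : ((⟨(i:ℕ)+1, h2⟩ : Fin k) : ℕ) = (i:ℕ)+1 := rfl; omega)
          · rfl
        have t3 : (if (i:ℕ) = k-1 then v i else 0) = 0 := by
          split_ifs
          · exact hvi
          · rfl
        rw [t1, t3, hvi, mul_zero, dif_pos (show 1 ≤ (i:ℕ) by omega)] at h1
        have hji : (⟨(i:ℕ)-1, lt_of_le_of_lt (Nat.sub_le _ _) i.isLt⟩ : Fin k) = j := by
          apply Fin.ext
          have h'' : ((⟨(i:ℕ)-1, lt_of_le_of_lt (Nat.sub_le _ _) i.isLt⟩ : Fin k) : ℕ) = (i:ℕ)-1 := rfl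
          omega
        rw [hji] at h1
        have : v j = -(0 - v j + 0) := by ring
        rw [h1] at this
        simpa using this
  obtain ⟨i, hi⟩ := Function.ne_iff.mp hv0
  exact hi (hall k i (by omega))
end

section
/- Let E_k ∈ ℝ^{k×k} be as above with (E_k)_H = e_k e_k^T (rank-one) and (E_k)_A = toeplitz(−1,0,1). Then the hypocoercivity index of E_k is k−1; i.e., the smallest m such that Σ_{j=0}^m (E_k)_A^j (E_k)_H ((E_k)_A^T)^j > 0 is m = k−1. -/
open Matrix

/-- `T_m = Σ_{j=0}^m (E_k)_A^j (E_k)_H ((E_k)_A^T)^j`. -/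
noncomputable def EkT (k m : ℕ) : Matrix (Fin k) (Fin k) ℝ :=
  ∑ j ∈ Finset.range (m+1),
    ((1/2 : ℝ) • (Ek k - (Ek k)ᵀ)) ^ j * ((1/2 : ℝ) • (Ek k + (Ek k)ᵀ)) *
      (((1/2 : ℝ) • (Ek k - (Ek k)ᵀ))ᵀ) ^ j

/-!
Write `A = (E_k)_A` and `e = e_k`. Since `(E_k)_H = e eᵀ`, the matrix `T_m` is the Gram-type sum
`∑_{j ≤ m} (Aʲ e)(Aʲ e)ᵀ`, so it is positive definite iff no nonzero vector is orthogonal to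
all `Aʲ e`, `j ≤ m`. Since `A` has superdiagonal `1` and vanishes above it, `Aʲ e` vanishes at
the indices below `k - 1 - j` and equals `1` at `k - 1 - j`. For `m = k - 1` these vectors form
a unit triangular system, hence span; for `m < k - 1` they all vanish at the first index, so
`e₁` is orthogonal to all of them.
-/

open Finset

section GramSum

variable {n ι : Type*} [Fintype n]

lemma dotProduct_sum_vecMulVec_mulVec (s : Finset ι) (u : ι → n → ℝ) (x : n → ℝ) :
    x ⬝ᵥ ((∑ j ∈ s, vecMulVec (u j) (u j)) *ᵥ x) = ∑ j ∈ s, (u j ⬝ᵥ x) ^ 2 := by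
  rw [sum_mulVec, dotProduct_sum]
  refine sum_congr rfl fun j _ => ?_
  rw [vecMulVec_mulVec, op_smul_eq_smul, dotProduct_smul, smul_eq_mul, dotProduct_comm x, sq]

lemma posDef_sum_vecMulVec_iff (s : Finset ι) (u : ι → n → ℝ) :
    (∑ j ∈ s, vecMulVec (u j) (u j)).PosDef ↔ ∀ x, (∀ j ∈ s, u j ⬝ᵥ x = 0) → x = 0 := by
  have hsemidef : (∑ j ∈ s, vecMulVec (u j) (u j)).PosSemidef :=
    posSemidef_sum s fun j _ => by simpa using posSemidef_vecMulVec_self_star (u j)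
  simp only [posDef_iff_dotProduct_mulVec, hsemidef.isHermitian, true_and, star_trivial,
    dotProduct_sum_vecMulVec_mulVec]
  refine ⟨fun hpos x hx => by_contra fun hx0 => ?_, fun h x hx0 => ?_⟩
  · have hzero : ∑ j ∈ s, (u j ⬝ᵥ x) ^ 2 = 0 :=
      sum_eq_zero fun j hj => by rw [hx j hj, sq, mul_zero]
    exact (hpos hx0).ne' hzero
  · refine lt_of_le_of_ne (sum_nonneg fun j _ => sq_nonneg _) fun hzero => hx0 (h x ?_)
    intro j hj
    exact pow_eq_zero_iff two_ne_zero |>.mp <|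
      (sum_eq_zero_iff_of_nonneg fun j _ => sq_nonneg _).mp hzero.symm j hj

end GramSum

section LeadingOne

variable {R : Type*} {k : ℕ}

def HasLeadingOneAt [Zero R] [One R] (w : Fin k → R) (p : ℕ) : Prop :=
  ∀ i : Fin k, ((i : ℕ) < p → w i = 0) ∧ ((i : ℕ) = p → w i = 1)

lemma eq_zero_of_forall_hasLeadingOneAt_dotProduct_eq_zero [CommRing R] {v : Fin k → Fin k → R}
    (hv : ∀ p, HasLeadingOneAt (v p) p) {x : Fin k → R} (hx : ∀ p, v p ⬝ᵥ x = 0) : x = 0 := by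
  have htri : (of v).IsUpperTriangular := fun p i hip => (hv p i).1 hip
  have hdet : (of v).det = 1 := by
    rw [det_of_isUpperTriangular htri]
    exact prod_eq_one fun p _ => (hv p p).2 rfl
  refine eq_zero_of_det_mem_nonZeroDivisors_of_mulVec_eq_zero (hdet ▸ one_mem _) ?_
  ext p
  exact hx p

variable [Semiring R]

lemma HasLeadingOneAt.mulVec {A : Matrix (Fin k) (Fin k) R}
    (hA0 : ∀ i j : Fin k, (i : ℕ) + 1 < j → A i j = 0)
    (hA1 : ∀ i j : Fin k, (j : ℕ) = i + 1 → A i j = 1) {w : Fin k → R} {p : ℕ}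
    (hp : p + 1 < k) (hw : HasLeadingOneAt w (p + 1)) : HasLeadingOneAt (A *ᵥ w) p := by
  have hterm : ∀ i l : Fin k, (l : ℕ) ≠ i + 1 → (i : ℕ) ≤ p → A i l * w l = 0 := by
    intro i l hl hi
    rcases lt_or_gt_of_ne hl with hlt | hgt
    · rw [(hw l).1 (by omega), mul_zero]
    · rw [hA0 i l hgt, zero_mul]
  intro i
  simp only [Matrix.mulVec, dotProduct]
  refine ⟨fun hi => sum_eq_zero fun l _ => ?_, fun hi => ?_⟩
  · by_cases hl : (l : ℕ) = i + 1
    · rw [(hw l).1 (by omega), mul_zero]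
    · exact hterm i l hl hi.le
  · rw [sum_eq_single (⟨p + 1, hp⟩ : Fin k)]
    · rw [hA1 _ _ (by simp [hi]), (hw _).2 rfl, one_mul]
    · exact fun l _ hl => hterm i l (fun h => hl (Fin.ext (by simp [h, hi]))) hi.le
    · simp

lemma hasLeadingOneAt_pow_mulVec_single_last {n : ℕ} {A : Matrix (Fin (n + 1)) (Fin (n + 1)) R}
    (hA0 : ∀ i j : Fin (n + 1), (i : ℕ) + 1 < j → A i j = 0)
    (hA1 : ∀ i j : Fin (n + 1), (j : ℕ) = i + 1 → A i j = 1) {j : ℕ} (hj : j ≤ n) :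
    HasLeadingOneAt (A ^ j *ᵥ Pi.single (Fin.last n) 1) (n - j) := by
  induction j with
  | zero =>
    intro i
    simp only [pow_zero, one_mulVec, Pi.single_apply, Fin.ext_iff, Fin.val_last]
    constructor <;> intro hi <;> split_ifs <;> first | rfl | omega
  | succ j ih =>
    rw [pow_succ', ← mulVec_mulVec]
    have hprev := ih (by omega)
    rw [show n - j = n - (j + 1) + 1 by omega] at hprev
    exact hprev.mulVec hA0 hA1 (by omega)

end LeadingOne

section Ek

noncomputable def EkA (k : ℕ) : Matrix (Fin k) (Fin k) ℝ := (1 / 2 : ℝ) • (Ek k - (Ek k)ᵀ)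

lemma EkA_apply (k : ℕ) (i j : Fin k) :
    EkA k i j = (if (j : ℕ) = i + 1 then 1 else 0) - (if (i : ℕ) = j + 1 then 1 else 0) := by
  simp only [EkA, Ek, Matrix.smul_apply, Matrix.sub_apply, transpose_apply, of_apply, smul_eq_mul]
  split_ifs <;> first | omega | norm_num

lemma EkA_apply_eq_zero {k : ℕ} (i j : Fin k) (h : (i : ℕ) + 1 < j) : EkA k i j = 0 := by
  rw [EkA_apply, if_neg (by omega), if_neg (by omega), sub_zero]

lemma EkA_apply_eq_one {k : ℕ} (i j : Fin k) (h : (j : ℕ) = i + 1) : EkA k i j = 1 := by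
  rw [EkA_apply, if_pos h, if_neg (by omega), sub_zero]

lemma half_smul_Ek_add_transpose (n : ℕ) :
    (1 / 2 : ℝ) • (Ek (n + 1) + (Ek (n + 1))ᵀ) =
      vecMulVec (Pi.single (Fin.last n) 1) (Pi.single (Fin.last n) 1) := by
  ext i j
  simp only [Ek, Matrix.smul_apply, Matrix.add_apply, transpose_apply, of_apply, smul_eq_mul,
    vecMulVec_apply, Pi.single_apply, Fin.ext_iff, Fin.val_last, Nat.add_sub_cancel]
  split_ifs <;> first | omega | norm_num

lemma EkT_eq_sum_vecMulVec (n m : ℕ) :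
    EkT (n + 1) m = ∑ j ∈ range (m + 1),
      vecMulVec (EkA (n + 1) ^ j *ᵥ Pi.single (Fin.last n) 1)
        (EkA (n + 1) ^ j *ᵥ Pi.single (Fin.last n) 1) := by
  refine sum_congr rfl fun j _ => ?_
  rw [half_smul_Ek_add_transpose, ← transpose_pow, mul_vecMulVec, vecMulVec_mul,
    vecMul_transpose]
  rfl

end Ek

/-- The hypocoercivity index of `E_k` is `k - 1`: `T_{k-1} > 0` but `T_m` is not
positive definite for any `m < k - 1`. -/
theorem Ek_hypocoercivity_index (k : ℕ) (hk : 1 ≤ k) :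
    (EkT k (k-1)).PosDef ∧ ∀ m < k - 1, ¬ (EkT k m).PosDef := by
  obtain ⟨n, rfl⟩ := Nat.exists_eq_add_of_le' hk
  set u : ℕ → Fin (n + 1) → ℝ := fun j => EkA (n + 1) ^ j *ᵥ Pi.single (Fin.last n) 1
  have hu : ∀ j ≤ n, HasLeadingOneAt (u j) (n - j) := fun j hj =>
    hasLeadingOneAt_pow_mulVec_single_last EkA_apply_eq_zero EkA_apply_eq_one hj
  simp only [Nat.add_sub_cancel, EkT_eq_sum_vecMulVec, posDef_sum_vecMulVec_iff, mem_range]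
  refine ⟨fun x hx => ?_, fun m hm hpos => ?_⟩
  · refine eq_zero_of_forall_hasLeadingOneAt_dotProduct_eq_zero (v := fun p => u (n - p))
      (fun p => ?_) fun p => hx _ (by omega)
    simpa [Nat.sub_sub_self (Nat.lt_succ_iff.mp p.2)] using hu (n - p) (by omega)
  · have hfirst : ∀ j < m + 1, u j ⬝ᵥ Pi.single 0 1 = 0 := fun j hj => by
      rw [dotProduct_single, (hu j (by omega) 0).1 (by rw [Fin.val_zero]; omega), zero_mul]
    exact Pi.single_ne_zero_iff.mpr one_ne_zero (hpos _ hfirst)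
end
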